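/- arXiv:2403.19683 — 2 statements merged into one kernel-verified Lean document; each statement's English description precedes it below -/
import Mathlib

section
/- Let λ > 0 with λ ≠ 1, and define f : D → ℂ on a small disk around 0 by f(ρ) = ρ / (1 - (log λ)·|ρ|) (with f(0) = 0). Then f is continuously differentiable (C¹) at 0 as a map ℝ² → ℝ². -/
/-!
Write the map as `ρ ↦ h ‖ρ‖ • ρ` with `h t = (1 - t log λ)⁻¹`, which is smooth near `0`.
Away from the origin the map is C¹ because the norm is. At the origin its derivative is
`h 0 • id`, since `(h ‖ρ‖ - h 0) • ρ = o(ρ)`; and near the origin the derivative differs from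
`h ‖ρ‖ • id` by `D(h ∘ ‖·‖)(ρ).smulRight ρ`, whose norm is at most `‖h' ‖ρ‖‖ * ‖ρ‖ → 0`
because the norm is `1`-Lipschitz.
-/

open Asymptotics Filter Topology

section RadialScaling

variable {E : Type*} [NormedAddCommGroup E] [InnerProductSpace ℝ E] {h : ℝ → ℝ}

lemma hasFDerivAt_apply_norm_smul_self_zero (hh : ContinuousAt h 0) :
    HasFDerivAt (fun x : E => h ‖x‖ • x) (h 0 • ContinuousLinearMap.id ℝ E) 0 := by
  rw [hasFDerivAt_iff_isLittleO_nhds_zero]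
  have hlim : Tendsto (fun x : E => h ‖x‖ - h 0) (𝓝 0) (𝓝 0) := by
    simpa using (hh.tendsto.comp (tendsto_norm_zero (E := E))).sub_const (h 0)
  have := ((isLittleO_one_iff ℝ).2 hlim).smul_isBigO (isBigO_refl (fun x : E => x) _)
  simpa [sub_smul] using this

lemma contDiffAt_apply_norm_smul_self {n : WithTop ℕ∞} {x : E} (hx : x ≠ 0)
    (hh : ContDiffAt ℝ n h ‖x‖) : ContDiffAt ℝ n (fun y : E => h ‖y‖ • y) x :=
  (hh.comp x (contDiffAt_norm ℝ hx)).smul contDiffAt_id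

lemma norm_fderiv_apply_norm_smul_self_sub_le {x : E} (hx : x ≠ 0)
    (hh : DifferentiableAt ℝ h ‖x‖) :
    ‖fderiv ℝ (fun y : E => h ‖y‖ • y) x - h ‖x‖ • ContinuousLinearMap.id ℝ E‖ ≤
      ‖fderiv ℝ h ‖x‖‖ * ‖x‖ := by
  have hnorm : DifferentiableAt ℝ (fun y : E => ‖y‖) x :=
    (contDiffAt_norm ℝ hx (n := 1)).differentiableAt one_ne_zero
  have hcomp : DifferentiableAt ℝ (fun y : E => h ‖y‖) x := hh.comp x hnorm
  have hF : HasFDerivAt (fun y : E => h ‖y‖ • y)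
      (h ‖x‖ • ContinuousLinearMap.id ℝ E + (fderiv ℝ (fun y : E => h ‖y‖) x).smulRight x) x :=
    hcomp.hasFDerivAt.smul (hasFDerivAt_id x)
  rw [hF.fderiv, add_sub_cancel_left,
    ContinuousLinearMap.norm_smulRight_apply]
  gcongr
  calc ‖fderiv ℝ (fun y : E => h ‖y‖) x‖
      = ‖(fderiv ℝ h ‖x‖).comp (fderiv ℝ (fun y : E => ‖y‖) x)‖ := by
        rw [← fderiv_comp x hh hnorm]; rfl
    _ ≤ ‖fderiv ℝ h ‖x‖‖ * ‖fderiv ℝ (fun y : E => ‖y‖) x‖ :=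
        ContinuousLinearMap.opNorm_comp_le _ _
    _ ≤ ‖fderiv ℝ h ‖x‖‖ * 1 := by
        gcongr
        simpa using norm_fderiv_le_of_lipschitz ℝ (x₀ := x) (lipschitzWith_one_norm (E := E))
    _ = _ := mul_one _

lemma continuousAt_fderiv_apply_norm_smul_self_zero (hh : ContDiffAt ℝ 1 h 0) :
    ContinuousAt (fderiv ℝ (fun x : E => h ‖x‖ • x)) 0 := by
  have hF0 := (hasFDerivAt_apply_norm_smul_self_zero (E := E) hh.continuousAt).fderiv
  have hnorm : Tendsto (fun x : E => ‖x‖) (𝓝 0) (𝓝 0) := tendsto_norm_zero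
  have hscale : Tendsto (fun x : E => h ‖x‖ • ContinuousLinearMap.id ℝ E) (𝓝 0)
      (𝓝 (h 0 • ContinuousLinearMap.id ℝ E)) :=
    (hh.continuousAt.tendsto.comp hnorm).smul_const _
  have hbound : Tendsto (fun x : E => ‖fderiv ℝ h ‖x‖‖ * ‖x‖) (𝓝 0) (𝓝 0) := by
    simpa using ((hh.continuousAt_fderiv one_ne_zero).tendsto.comp hnorm).norm.mul hnorm
  have hdiff : ∀ᶠ x : E in 𝓝 0, DifferentiableAt ℝ h ‖x‖ :=
    hnorm.eventually ((hh.eventually (by simp)).mono fun t ht => ht.differentiableAt one_ne_zero)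
  have herr : Tendsto (fun x : E =>
      fderiv ℝ (fun y : E => h ‖y‖ • y) x - h ‖x‖ • ContinuousLinearMap.id ℝ E) (𝓝 0) (𝓝 0) := by
    refine squeeze_zero_norm' (hdiff.mono fun x hx => ?_) hbound
    rcases eq_or_ne x 0 with rfl | hx0
    · simp [hF0]
    · exact norm_fderiv_apply_norm_smul_self_sub_le hx0 hx
  rw [ContinuousAt, hF0]
  simpa using hscale.add herr

theorem contDiffAt_apply_norm_smul_self_zero (hh : ContDiffAt ℝ 1 h 0) :
    ContDiffAt ℝ 1 (fun x : E => h ‖x‖ • x) 0 := by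
  have hsmooth : ∀ᶠ x : E in 𝓝 0, ContDiffAt ℝ 1 h ‖x‖ :=
    (tendsto_norm_zero (E := E)).eventually (hh.eventually (by simp))
  obtain ⟨u, hu, hsmooth⟩ := hsmooth.exists_mem
  refine contDiffAt_one_iff.2 ⟨fderiv ℝ (fun x : E => h ‖x‖ • x), u, hu, fun x hx => ?_,
    fun x hx => ?_⟩
  · rcases eq_or_ne x 0 with rfl | hx0
    · exact (continuousAt_fderiv_apply_norm_smul_self_zero hh).continuousWithinAt
    · exact ((contDiffAt_apply_norm_smul_self hx0 (hsmooth x hx)).continuousAt_fderiv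
        one_ne_zero).continuousWithinAt
  · rcases eq_or_ne x 0 with rfl | hx0
    · exact (hasFDerivAt_apply_norm_smul_self_zero hh.continuousAt).differentiableAt.hasFDerivAt
    · exact ((contDiffAt_apply_norm_smul_self hx0 (hsmooth x hx)).differentiableAt
        one_ne_zero).hasFDerivAt

end RadialScaling

theorem stmt0_general (lam : ℝ) :
    ContDiffAt ℝ 1 (fun ρ : ℂ => ρ / (1 - (Real.log lam : ℂ) * (‖ρ‖ : ℂ))) 0 := by
  have hh : ContDiffAt ℝ 1 (fun t : ℝ => (1 - Real.log lam * t)⁻¹) 0 :=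
    (contDiffAt_const.sub (contDiffAt_const.mul contDiffAt_id)).inv (by simp)
  convert contDiffAt_apply_norm_smul_self_zero hh using 2 with ρ
  rw [Complex.real_smul, div_eq_inv_mul]
  push_cast
  rfl

/-- The coordinate change `ρ ↦ ρ / (1 - (log λ)·|ρ|)` is C¹ at the origin,
regarding `ℂ ≅ ℝ²`. -/
theorem stmt0 (lam : ℝ) (hlam : 0 < lam) (hlam1 : lam ≠ 1) :
    ContDiffAt ℝ 1 (fun ρ : ℂ => ρ / (1 - (Real.log lam : ℂ) * (‖ρ‖ : ℂ))) 0 :=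
  stmt0_general lam
end

section
/- Let S₀ > 1 and let g : [S₀, ∞) → ℝ satisfy: g is smooth, |g(S)| ≤ C e^{-cS}, and |g'(S)| ≤ C e^{-cS} for constants C, c > 0. Define Φ on {φ ∈ ℝ² : 0 < |φ| < 1/S₀} by Φ(φ) = φ / (1 + |φ|·g(1/|φ|)), extended by Φ(0) = 0. Then Φ is C¹ at the origin with derivative the identity. -/
set_option maxHeartbeats 1000000


/-- If `g` is smooth on `[S₀, ∞)` with `|g|` and `|g'|` exponentially small,
then `Φ(φ) = φ / (1 + |φ|·g(1/|φ|))` (with `Φ(0) = 0`) is C¹ at the origin of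
`ℝ² ≅ ℂ` with derivative the identity. -/
theorem stmt17 (S₀ : ℝ) (hS₀ : 1 < S₀) (g : ℝ → ℝ) (C c : ℝ) (hC : 0 < C) (hc : 0 < c)
    (hg : ContDiffOn ℝ (⊤ : ℕ∞) g (Set.Ici S₀))
    (hbd : ∀ S : ℝ, S₀ ≤ S → |g S| ≤ C * Real.exp (-c * S))
    (hbd' : ∀ S : ℝ, S₀ ≤ S → |derivWithin g (Set.Ici S₀) S| ≤ C * Real.exp (-c * S)) :
    ContDiffAt ℝ 1
      (fun φ : ℂ => if φ = 0 then 0 else φ / ((1 + ‖φ‖ * g (1 / ‖φ‖) : ℝ) : ℂ)) 0 ∧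
    fderiv ℝ
      (fun φ : ℂ => if φ = 0 then 0 else φ / ((1 + ‖φ‖ * g (1 / ‖φ‖) : ℝ) : ℂ)) 0
      = ContinuousLinearMap.id ℝ ℂ := by
  classical
  obtain ⟨h, hh_def⟩ : ∃ h : ℝ → ℝ, h = fun t => (1 + t * g (1 / t))⁻¹ := ⟨_, rfl⟩
  obtain ⟨F, hF_def⟩ : ∃ F : ℂ → ℂ, F = fun ψ => h ‖ψ‖ • ψ := ⟨_, rfl⟩
  have hfun : (fun φ : ℂ => if φ = 0 then 0 else φ / ((1 + ‖φ‖ * g (1 / ‖φ‖) : ℝ) : ℂ)) = F := by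
    funext ψ
    by_cases hψ : ψ = 0
    · simp [hψ, hF_def]
    · simp only [hF_def, hh_def, if_neg hψ]
      rw [Complex.real_smul, Complex.ofReal_inv, ← div_eq_inv_mul]
  -- constants
  obtain ⟨K, hK_def⟩ : ∃ K : ℝ, K = C / c + 4 * C / c ^ 2 := ⟨_, rfl⟩
  have hK0 : 0 < K := by rw [hK_def]; positivity
  obtain ⟨r, hr_def⟩ : ∃ r : ℝ, r = min (2 * S₀)⁻¹ (2 * (K + 1))⁻¹ := ⟨_, rfl⟩
  have hr0 : 0 < r := by
    rw [hr_def]; apply lt_min <;> positivity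
  have hrS : r ≤ (2 * S₀)⁻¹ := hr_def ▸ min_le_left _ _
  have hrK : r ≤ (2 * (K + 1))⁻¹ := hr_def ▸ min_le_right _ _
  have hr1 : r ≤ 1 / 2 := by
    refine hrK.trans ?_
    have h2 : (2:ℝ) ≤ 2 * (K + 1) := by linarith
    calc (2 * (K + 1))⁻¹ ≤ (2:ℝ)⁻¹ := inv_anti₀ (by norm_num) h2
      _ = 1 / 2 := by norm_num
  -- basic facts for 0 < t < r
  have hSgt : ∀ t : ℝ, 0 < t → t < r → S₀ < 1 / t := by
    intro t ht htr
    have h1 : t < (2 * S₀)⁻¹ := lt_of_lt_of_le htr hrS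
    have h2 : t * (2 * S₀) < 1 := by
      have := mul_lt_mul_of_pos_right h1 (by positivity : (0:ℝ) < 2 * S₀)
      rwa [inv_mul_cancel₀ (by positivity : (2 * S₀) ≠ 0)] at this
    rw [lt_div_iff₀ ht]
    nlinarith
  have hexp1 : ∀ t : ℝ, 0 < t → Real.exp (-(c * (1 / t))) ≤ t / c := by
    intro t ht
    have hS : 0 < 1 / t := by positivity
    have h1 : c * (1 / t) ≤ Real.exp (c * (1 / t)) := by
      nlinarith [Real.add_one_le_exp (c * (1 / t))]
    have h2 : 0 < c * (1 / t) := by positivity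
    rw [Real.exp_neg]
    calc (Real.exp (c * (1 / t)))⁻¹ ≤ (c * (1 / t))⁻¹ := by
          apply inv_anti₀ h2 h1
      _ = t / c := by field_simp
  have hexp2 : ∀ t : ℝ, 0 < t → (1 / t) * Real.exp (-(c * (1 / t))) ≤ 4 * t / c ^ 2 := by
    intro t ht
    set S : ℝ := 1 / t with hS_def
    have hS : 0 < S := by positivity
    have h1 : c * S / 2 ≤ Real.exp (c * S / 2) := by
      nlinarith [Real.add_one_le_exp (c * S / 2)]
    have h2 : (c * S / 2) ^ 2 ≤ Real.exp (c * S) := by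
      have he : Real.exp (c * S) = Real.exp (c * S / 2) * Real.exp (c * S / 2) := by
        rw [← Real.exp_add]; ring_nf
      have hpos : (0:ℝ) < c * S / 2 := by positivity
      calc (c * S / 2) ^ 2 = (c * S / 2) * (c * S / 2) := sq (c * S / 2)
        _ ≤ Real.exp (c * S / 2) * Real.exp (c * S / 2) :=
            mul_le_mul h1 h1 hpos.le (Real.exp_pos _).le
        _ = Real.exp (c * S) := he.symm
    have h3 : 0 < (c * S / 2) ^ 2 := by positivity
    have h4 : Real.exp (-(c * S)) ≤ ((c * S / 2) ^ 2)⁻¹ := by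
      rw [Real.exp_neg]
      exact inv_anti₀ h3 h2
    have h5 : S * Real.exp (-(c * S)) ≤ S * ((c * S / 2) ^ 2)⁻¹ :=
      mul_le_mul_of_nonneg_left h4 hS.le
    refine h5.trans (le_of_eq ?_)
    rw [hS_def]
    field_simp
    ring
  -- derivative of g at interior points
  have hgderiv : ∀ t : ℝ, 0 < t → t < r → HasDerivAt g (deriv g (1 / t)) (1 / t) := by
    intro t ht htr
    have hmem : Set.Ici S₀ ∈ nhds (1 / t) := Ici_mem_nhds (hSgt t ht htr)
    exact ((hg.contDiffAt hmem).differentiableAt (by simp)).hasDerivAt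
  have hgb : ∀ t : ℝ, 0 < t → t < r → |g (1 / t)| ≤ C / c * t := by
    intro t ht htr
    have h1 := hbd (1 / t) (hSgt t ht htr).le
    have h2 := hexp1 t ht
    rw [neg_mul] at h1
    calc |g (1 / t)| ≤ C * Real.exp (-(c * (1 / t))) := h1
      _ ≤ C * (t / c) := by nlinarith
      _ = C / c * t := by ring
  have hgb' : ∀ t : ℝ, 0 < t → t < r → (1 / t) * |deriv g (1 / t)| ≤ 4 * C / c ^ 2 * t := by
    intro t ht htr
    have hmem : Set.Ici S₀ ∈ nhds (1 / t) := Ici_mem_nhds (hSgt t ht htr)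
    have heq : derivWithin g (Set.Ici S₀) (1 / t) = deriv g (1 / t) :=
      derivWithin_of_mem_nhds hmem
    have h1 := hbd' (1 / t) (hSgt t ht htr).le
    rw [heq, neg_mul] at h1
    have h2 := hexp2 t ht
    have hS : (0:ℝ) < 1 / t := by positivity
    calc (1 / t) * |deriv g (1 / t)| ≤ (1 / t) * (C * Real.exp (-(c * (1 / t)))) := by
          nlinarith
      _ = C * ((1 / t) * Real.exp (-(c * (1 / t)))) := by ring
      _ ≤ C * (4 * t / c ^ 2) := by nlinarith
      _ = 4 * C / c ^ 2 * t := by ring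
  have ht1 : ∀ t : ℝ, 0 < t → t < r → t ≤ 1 := fun t ht htr => by nlinarith
  have hCcK : C / c ≤ K := by
    have : (0:ℝ) ≤ 4 * C / c ^ 2 := by positivity
    rw [hK_def]; linarith
  have hKt : ∀ t : ℝ, 0 < t → t < r → K * t ≤ 1 / 2 := by
    intro t ht htr
    have h1 : t ≤ (2 * (K + 1))⁻¹ := (le_of_lt htr).trans hrK
    have h2 : K * t ≤ K * (2 * (K + 1))⁻¹ := by nlinarith
    have h3 : K * (2 * (K + 1))⁻¹ ≤ 1 / 2 := by
      rw [mul_inv_le_iff₀ (by positivity)]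
      nlinarith
    linarith
  have htg : ∀ t : ℝ, 0 < t → t < r → |t * g (1 / t)| ≤ K * t := by
    intro t ht htr
    have h1 := hgb t ht htr
    have h2 := ht1 t ht htr
    rw [abs_mul, abs_of_pos ht]
    have hCc0 : (0:ℝ) ≤ C / c := by positivity
    calc t * |g (1 / t)| ≤ t * (C / c * t) := by nlinarith [abs_nonneg (g (1 / t))]
      _ = (C / c * t) * t := by ring
      _ ≤ K * t := by
          apply mul_le_mul_of_nonneg_right _ ht.le
          nlinarith
  have hGlb : ∀ t : ℝ, 0 < t → t < r → 1 / 2 ≤ 1 + t * g (1 / t) := by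
    intro t ht htr
    have h1 := htg t ht htr
    have h2 := hKt t ht htr
    have := abs_le.1 h1
    linarith [this.1]
  have hGne : ∀ t : ℝ, 0 < t → t < r → (1 + t * g (1 / t)) ≠ 0 := by
    intro t ht htr
    have := hGlb t ht htr; linarith
  -- bound on |h t - 1|
  have hhsub : ∀ t : ℝ, 0 < t → t < r → |h t - 1| ≤ 2 * (K * t) := by
    intro t ht htr
    have hG := hGlb t ht htr
    have h1 := htg t ht htr
    have hGne' := hGne t ht htr
    have e1 : h t - 1 = (-(t * g (1 / t))) / (1 + t * g (1 / t)) := by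
      rw [hh_def]; field_simp; ring
    rw [e1, abs_div, abs_neg]
    rw [div_le_iff₀ (by rw [abs_of_pos (by linarith)]; linarith)]
    rw [abs_of_pos (by linarith : (0:ℝ) < 1 + t * g (1 / t))]
    nlinarith [mul_nonneg hK0.le ht.le, abs_nonneg (t * g (1 / t))]
  -- derivative of h
  have hhd : ∀ t : ℝ, 0 < t → t < r →
      ∃ h' : ℝ, HasDerivAt h h' t ∧ |h'| ≤ 4 * (K * t) := by
    intro t ht htr
    rw [hh_def]
    have hgd := hgderiv t ht htr
    have hinv : HasDerivAt (fun s : ℝ => 1 / s) (-(t ^ 2)⁻¹) t := by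
      simpa [one_div] using hasDerivAt_inv (ne_of_gt ht)
    have h1 : HasDerivAt (fun s => g (1 / s)) (deriv g (1 / t) * -(t ^ 2)⁻¹) t := by
      have := hgd.comp t hinv
      simpa [Function.comp_def] using this
    have h2 : HasDerivAt (fun s => 1 + s * g (1 / s))
        (1 * g (1 / t) + t * (deriv g (1 / t) * -(t ^ 2)⁻¹)) t :=
      ((hasDerivAt_id t).mul h1).const_add 1
    have h3 : HasDerivAt (fun s => (1 + s * g (1 / s))⁻¹)
        (-(1 * g (1 / t) + t * (deriv g (1 / t) * -(t ^ 2)⁻¹)) / (1 + t * g (1 / t)) ^ 2) t :=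
      h2.inv (hGne t ht htr)
    refine ⟨_, h3, ?_⟩
    have hG := hGlb t ht htr
    have hb1 := hgb t ht htr
    have hb2 := hgb' t ht htr
    have e2 : t * (deriv g (1 / t) * -(t ^ 2)⁻¹) = -((1 / t) * deriv g (1 / t)) := by
      field_simp
    have habs1 : |1 * g (1 / t) + t * (deriv g (1 / t) * -(t ^ 2)⁻¹)| ≤ K * t := by
      rw [one_mul, e2]
      calc |g (1 / t) + -((1 / t) * deriv g (1 / t))|
          ≤ |g (1 / t)| + |(1 / t) * deriv g (1 / t)| := by
            simpa using abs_add_le (g (1 / t)) (-((1 / t) * deriv g (1 / t)))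
        _ ≤ C / c * t + 4 * C / c ^ 2 * t := by
            have : |(1 / t) * deriv g (1 / t)| = (1 / t) * |deriv g (1 / t)| := by
              rw [abs_mul, abs_of_pos (by positivity : (0:ℝ) < 1 / t)]
            rw [this]; exact add_le_add hb1 hb2
        _ = K * t := by rw [hK_def]; ring
    have hsq : (1 / 2 : ℝ) ^ 2 ≤ (1 + t * g (1 / t)) ^ 2 := by nlinarith
    rw [abs_div, abs_neg]
    rw [abs_of_pos (by nlinarith : (0:ℝ) < (1 + t * g (1 / t)) ^ 2)]
    rw [div_le_iff₀ (by nlinarith)]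
    nlinarith [abs_nonneg (1 * g (1 / t) + t * (deriv g (1 / t) * -(t ^ 2)⁻¹)),
      mul_le_mul_of_nonneg_left hsq (by positivity : (0:ℝ) ≤ K * t)]
  -- the derivative of F at nonzero points, with bound
  obtain ⟨M, hM_def⟩ : ∃ M : ℝ, M = 2 * K + 2 := ⟨_, rfl⟩
  have hM0 : 0 < M := by rw [hM_def]; linarith
  have hDer : ∀ φ : ℂ, φ ≠ 0 → ‖φ‖ < r →
      ∃ D : ℂ →L[ℝ] ℂ, HasFDerivAt F D φ ∧ ‖D - ContinuousLinearMap.id ℝ ℂ‖ ≤ M * ‖φ‖ := by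
    intro φ hφ hφr
    have ht : 0 < ‖φ‖ := norm_pos_iff.2 hφ
    obtain ⟨h', hh', hh'b⟩ := hhd ‖φ‖ ht hφr
    have hNd : DifferentiableAt ℝ (fun ψ : ℂ => ‖ψ‖) φ :=
      (contDiffAt_norm (n := 1) ℝ hφ).differentiableAt one_ne_zero
    have hN : HasFDerivAt (fun ψ : ℂ => ‖ψ‖) (fderiv ℝ (fun ψ : ℂ => ‖ψ‖) φ) φ :=
      hNd.hasFDerivAt
    have hNle : ‖fderiv ℝ (fun ψ : ℂ => ‖ψ‖) φ‖ ≤ 1 := by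
      have := norm_fderiv_le_of_lipschitz (x₀ := φ) ℝ (lipschitzWith_one_norm (E := ℂ))
      simpa using this
    have hcφ : HasFDerivAt (fun ψ : ℂ => h ‖ψ‖)
        (h' • fderiv ℝ (fun ψ : ℂ => ‖ψ‖) φ) φ := by
      have := hh'.comp_hasFDerivAt φ hN
      simpa [Function.comp_def] using this
    have hD : HasFDerivAt F (h ‖φ‖ • ContinuousLinearMap.id ℝ ℂ +
        (h' • fderiv ℝ (fun ψ : ℂ => ‖ψ‖) φ).smulRight φ) φ := by
      rw [hF_def]
      exact hcφ.smul (hasFDerivAt_id φ)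
    refine ⟨_, hD, ?_⟩
    have e3 : h ‖φ‖ • ContinuousLinearMap.id ℝ ℂ +
          (h' • fderiv ℝ (fun ψ : ℂ => ‖ψ‖) φ).smulRight φ - ContinuousLinearMap.id ℝ ℂ
        = (h ‖φ‖ - 1) • ContinuousLinearMap.id ℝ ℂ +
          (h' • fderiv ℝ (fun ψ : ℂ => ‖ψ‖) φ).smulRight φ := by
      module
    rw [e3]
    have b1 : ‖(h ‖φ‖ - 1) • ContinuousLinearMap.id ℝ ℂ‖ ≤ 2 * (K * ‖φ‖) := by
      have hns := norm_smul (h ‖φ‖ - 1) (ContinuousLinearMap.id ℝ ℂ)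
      rw [Real.norm_eq_abs] at hns
      rw [hns]
      have hb := hhsub ‖φ‖ ht hφr
      calc |h ‖φ‖ - 1| * ‖ContinuousLinearMap.id ℝ ℂ‖ ≤ |h ‖φ‖ - 1| * 1 :=
            mul_le_mul_of_nonneg_left ContinuousLinearMap.norm_id_le (abs_nonneg _)
        _ = |h ‖φ‖ - 1| := mul_one _
        _ ≤ 2 * (K * ‖φ‖) := hb
    have b2 : ‖(h' • fderiv ℝ (fun ψ : ℂ => ‖ψ‖) φ).smulRight φ‖ ≤ 4 * (K * ‖φ‖) * ‖φ‖ := by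
      have hns := norm_smul h' (fderiv ℝ (fun ψ : ℂ => ‖ψ‖) φ)
      rw [Real.norm_eq_abs] at hns
      rw [ContinuousLinearMap.norm_smulRight_apply, hns]
      have hb : |h'| * ‖fderiv ℝ (fun ψ : ℂ => ‖ψ‖) φ‖ ≤ 4 * (K * ‖φ‖) := by
        calc |h'| * ‖fderiv ℝ (fun ψ : ℂ => ‖ψ‖) φ‖ ≤ (4 * (K * ‖φ‖)) * 1 :=
              mul_le_mul hh'b hNle (norm_nonneg _) (by positivity)
          _ = 4 * (K * ‖φ‖) := mul_one _
      exact mul_le_mul_of_nonneg_right hb (norm_nonneg _)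
    have hKr : 4 * (K * ‖φ‖) * ‖φ‖ ≤ 2 * ‖φ‖ := by
      have := hKt ‖φ‖ ht hφr
      nlinarith
    calc ‖(h ‖φ‖ - 1) • ContinuousLinearMap.id ℝ ℂ +
          (h' • fderiv ℝ (fun ψ : ℂ => ‖ψ‖) φ).smulRight φ‖
        ≤ ‖(h ‖φ‖ - 1) • ContinuousLinearMap.id ℝ ℂ‖ +
          ‖(h' • fderiv ℝ (fun ψ : ℂ => ‖ψ‖) φ).smulRight φ‖ := norm_add_le _ _
      _ ≤ 2 * (K * ‖φ‖) + 2 * ‖φ‖ := add_le_add b1 (b2.trans hKr)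
      _ = M * ‖φ‖ := by rw [hM_def]; ring
  -- derivative at the origin
  have hF0 : HasFDerivAt F (ContinuousLinearMap.id ℝ ℂ) 0 := by
    rw [hasFDerivAt_iff_isLittleO_nhds_zero, Asymptotics.isLittleO_iff]
    intro ε hε
    have hδ : 0 < min r (ε / (2 * K + 1)) := lt_min hr0 (by positivity)
    filter_upwards [Metric.ball_mem_nhds (0:ℂ) hδ] with ψ hψ
    simp only [Metric.mem_ball, dist_zero_right] at hψ
    simp only [zero_add]
    by_cases h0 : ψ = 0
    · simp [h0, hF_def]
    · have ht : 0 < ‖ψ‖ := norm_pos_iff.2 h0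
      have hψr : ‖ψ‖ < r := lt_of_lt_of_le hψ (min_le_left _ _)
      have hψε : ‖ψ‖ < ε / (2 * K + 1) := lt_of_lt_of_le hψ (min_le_right _ _)
      have e : F ψ - F 0 - (ContinuousLinearMap.id ℝ ℂ) ψ = (h ‖ψ‖ - 1) • ψ := by
        simp [hF_def, sub_smul]
      have hns := norm_smul (h ‖ψ‖ - 1) ψ
      rw [Real.norm_eq_abs] at hns
      rw [e, hns]
      have hb := hhsub ‖ψ‖ ht hψr
      have hε' : ‖ψ‖ * (2 * K + 1) < ε := (lt_div_iff₀ (by positivity)).1 hψε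
      calc |h ‖ψ‖ - 1| * ‖ψ‖ ≤ (2 * (K * ‖ψ‖)) * ‖ψ‖ :=
            mul_le_mul_of_nonneg_right hb (norm_nonneg _)
        _ ≤ ε * ‖ψ‖ := by nlinarith [norm_nonneg ψ]
  have hfderiv0 : fderiv ℝ F 0 = ContinuousLinearMap.id ℝ ℂ := hF0.fderiv
  have hFd : ∀ φ ∈ Metric.ball (0:ℂ) r, HasFDerivAt F (fderiv ℝ F φ) φ := by
    intro φ hφ
    by_cases h0 : φ = 0
    · rw [h0, hfderiv0]; exact hF0
    · obtain ⟨D, hD, -⟩ := hDer φ h0 (by simpa [Metric.mem_ball, dist_zero_right] using hφ)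
      exact hD.differentiableAt.hasFDerivAt
  have hbound : ∀ φ : ℂ, ‖φ‖ < r → ‖fderiv ℝ F φ - fderiv ℝ F 0‖ ≤ M * ‖φ‖ := by
    intro φ hφr
    by_cases h0 : φ = 0
    · simp [h0]
    · obtain ⟨D, hD, hDb⟩ := hDer φ h0 hφr
      rw [hD.fderiv, hfderiv0]
      exact hDb
  have hcont0 : ContinuousAt (fderiv ℝ F) 0 := by
    apply continuousAt_of_locally_lipschitz hr0 M
    intro y hy
    rw [dist_eq_norm, dist_eq_norm, sub_zero]
    rw [dist_zero_right] at hy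
    exact hbound y hy
  have hcontAt : ∀ φ ∈ Metric.ball (0:ℂ) r, ContinuousAt (fderiv ℝ F) φ := by
    intro φ hφ
    by_cases h0 : φ = 0
    · rw [h0]; exact hcont0
    · have hφr : ‖φ‖ < r := by simpa [Metric.mem_ball, dist_zero_right] using hφ
      have ht : 0 < ‖φ‖ := norm_pos_iff.2 h0
      have hn1 : ContDiffAt ℝ 1 (fun ψ : ℂ => ‖ψ‖) φ := contDiffAt_norm ℝ h0
      have hg1 : ContDiffAt ℝ 1 g (1 / ‖φ‖) :=
        (hg.contDiffAt (Ici_mem_nhds (hSgt ‖φ‖ ht hφr))).of_le (by simp)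
      have hinv1 : ContDiffAt ℝ 1 (fun s : ℝ => 1 / s) ‖φ‖ := by
        simpa [one_div] using contDiffAt_inv (𝕜 := ℝ) (ne_of_gt ht)
      have hcomp : ContDiffAt ℝ 1 (fun s : ℝ => g (1 / s)) ‖φ‖ := by
        have := hg1.comp ‖φ‖ hinv1
        simpa [Function.comp_def] using this
      have hGt : ContDiffAt ℝ 1 (fun s : ℝ => 1 + s * g (1 / s)) ‖φ‖ :=
        contDiffAt_const.add (contDiffAt_id.mul hcomp)
      have hh1 : ContDiffAt ℝ 1 h ‖φ‖ := by
        rw [hh_def]; exact hGt.inv (hGne ‖φ‖ ht hφr)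
      have hhc : ContDiffAt ℝ 1 (fun ψ : ℂ => h ‖ψ‖) φ := by
        have := hh1.comp φ hn1
        simpa [Function.comp_def] using this
      have hF1 : ContDiffAt ℝ 1 F φ := by
        rw [hF_def]; exact hhc.smul contDiffAt_id
      have := hF1.fderiv_right (m := 0) (by norm_num)
      exact this.continuousAt
  have hcontOn : ContinuousOn (fderiv ℝ F) (Metric.ball (0:ℂ) r) := fun φ hφ =>
    (hcontAt φ hφ).continuousWithinAt
  constructor
  · rw [hfun]
    have h1 : ContDiffAt ℝ ((0:ℕ) + 1) F 0 :=
      contDiffAt_succ_iff_hasFDerivAt.2 ⟨fderiv ℝ F,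
        ⟨Metric.ball 0 r, Metric.ball_mem_nhds _ hr0, hFd⟩,
        contDiffAt_zero.2 ⟨Metric.ball 0 r, Metric.ball_mem_nhds _ hr0, hcontOn⟩⟩
    simpa using h1
  · rw [hfun]; exact hfderiv0
end
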